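/- arXiv:2001.11834 — 3 statements merged into one kernel-verified Lean document; each statement's English description precedes it below -/
import Mathlib

section
/- Let μ be a Borel probability measure on ℝ^d whose support contains an open cube U. If the lower local dimension map x ↦ h_μ(x) is continuous on U, then h_μ is identically equal to d on U. -/
/-!
Comparing `μ` with a Haar measure `ν` on small closed balls through the Besicovitch
differentiation theorem, in both directions, gives `μ (B(x, r)) ≳ r ^ d` for `μ`-a.e. `x` and
`μ (B(x, r)) ≲ r ^ d` for `ν`-a.e. `x`. Hence `h_μ ≤ d` holds `μ`-a.e., and `h_μ ≥ d` holds
`ν`-a.e. on the support. If `h_μ` is continuous on an open set `U` inside the support, then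
`{h_μ < d}` and `{h_μ > d}` are open subsets of `U`, the first `ν`-null and the second `μ`-null,
so both are empty.
-/

open MeasureTheory Filter Set Metric Topology ENNReal

noncomputable section
open scoped Classical

/-- Euclidean space `ℝ^d`. -/
abbrev Rd (d : ℕ) := EuclideanSpace ℝ (Fin d)

/-- The support of a measure: points all whose balls have positive mass. -/
def msupp {X : Type*} [MetricSpace X] [MeasurableSpace X] (μ : Measure X) : Set X :=
  {x | ∀ r : ℝ, 0 < r → 0 < μ (ball x r)}

/-- The lower local dimension `h_μ(x) = liminf_{r→0⁺} log μ(B(x,r)) / log r`. -/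
def locDim {X : Type*} [MetricSpace X] [MeasurableSpace X] (μ : Measure X) (x : X) : EReal :=
  Filter.liminf
    (fun r : ℝ => ((Real.log (μ (ball x r)).toReal / Real.log r : ℝ) : EReal)) (𝓝[>] 0)

/-- The singularity spectrum `D_μ(H) = dim_H {x ∈ Supp μ : h_μ(x) = H}`,
with the convention `dim ∅ = -∞`. -/
def specM {X : Type*} [MetricSpace X] [MeasurableSpace X] (μ : Measure X) (H : ℝ) : EReal :=
  if {x | x ∈ msupp μ ∧ locDim μ x = (H : EReal)} = ∅ then ⊥
  else ((dimH {x | x ∈ msupp μ ∧ locDim μ x = (H : EReal)} : ℝ≥0∞) : EReal)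

open Module NNReal

lemma tendsto_log_const_mul_rpow_div_log {C : ℝ} (hC : 0 < C) (s : ℝ) :
    Tendsto (fun r => Real.log (C * r ^ s) / Real.log r) (𝓝[>] 0) (𝓝 s) := by
  have hlim : Tendsto (fun r => s + Real.log C / Real.log r) (𝓝[>] 0) (𝓝 s) := by
    simpa using tendsto_const_nhds.add
      (tendsto_const_nhds.div_atBot Real.tendsto_log_nhdsGT_zero)
  refine hlim.congr' ?_
  filter_upwards [Ioo_mem_nhdsGT (zero_lt_one' ℝ)] with r ⟨hr0, hr1⟩
  rw [Real.log_mul hC.ne' (Real.rpow_pos_of_pos hr0 s).ne', Real.log_rpow hr0, add_div,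
    mul_div_cancel_right₀ _ (Real.log_neg hr0 hr1).ne, add_comm]

lemma tendsto_half_nhdsGT_zero : Tendsto (fun r : ℝ => r / 2) (𝓝[>] 0) (𝓝[>] 0) :=
  tendsto_nhdsWithin_iff.2
    ⟨((continuous_id.div_const 2).tendsto' 0 0 (zero_div 2)).mono_left nhdsWithin_le_nhds,
      eventually_nhdsWithin_of_forall fun _ (hr : (0 : ℝ) < _) => half_pos hr⟩

section MetricSpace

variable {X : Type*} [MetricSpace X] [MeasurableSpace X] {μ : Measure X} {x : X} {C s : ℝ}

lemma locDim_le_of_eventually_le (hC : 0 < C)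
    (h : ∀ᶠ r in 𝓝[>] 0, C * r ^ s ≤ (μ (ball x r)).toReal) : locDim μ x ≤ s := by
  have hlim := EReal.tendsto_coe.2 (tendsto_log_const_mul_rpow_div_log hC s)
  refine (liminf_le_liminf ?_).trans_eq hlim.liminf_eq
  filter_upwards [h, Ioo_mem_nhdsGT (zero_lt_one' ℝ)] with r hr ⟨hr0, hr1⟩
  exact EReal.coe_le_coe_iff.2 <| div_le_div_of_nonpos_of_le (Real.log_neg hr0 hr1).le
    (Real.log_le_log (by positivity) hr)

/- `hx` is needed: where `μ (ball x r) = 0`, the ratio in `locDim` is `log 0 / log r = 0`. -/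
lemma le_locDim_of_eventually_le [IsFiniteMeasure μ] (hx : x ∈ msupp μ) (hC : 0 < C)
    (h : ∀ᶠ r in 𝓝[>] 0, (μ (ball x r)).toReal ≤ C * r ^ s) : (s : EReal) ≤ locDim μ x := by
  have hlim := EReal.tendsto_coe.2 (tendsto_log_const_mul_rpow_div_log hC s)
  refine hlim.liminf_eq.symm.trans_le (liminf_le_liminf ?_)
  filter_upwards [h, Ioo_mem_nhdsGT (zero_lt_one' ℝ)] with r hr ⟨hr0, hr1⟩
  exact EReal.coe_le_coe_iff.2 <| div_le_div_of_nonpos_of_le (Real.log_neg hr0 hr1).le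
    (Real.log_le_log (ENNReal.toReal_pos (hx r hr0).ne' (measure_ne_top μ _)) hr)

lemma eq_empty_of_isOpen_of_subset_msupp {V : Set X} (hV : IsOpen V) (hVμ : V ⊆ msupp μ)
    (h0 : μ V = 0) : V = ∅ := by
  refine eq_empty_of_forall_notMem fun y hy => ?_
  obtain ⟨ε, hε, hball⟩ := isOpen_iff.1 hV y hy
  exact (hVμ hy ε hε).ne' (measure_mono_null hball h0)

end MetricSpace

lemma ae_exists_eventually_measure_closedBall_le {β : Type*} [MetricSpace β]
    [SecondCountableTopology β] [HasBesicovitchCovering β] [MeasurableSpace β] [BorelSpace β]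
    (μ ν : Measure β) [IsLocallyFiniteMeasure μ] [IsLocallyFiniteMeasure ν] :
    ∀ᵐ x ∂ν, ∃ K : ℝ≥0, 0 < K ∧ ∀ᶠ r in 𝓝[>] 0, μ (closedBall x r) ≤ K * ν (closedBall x r) := by
  filter_upwards [Besicovitch.ae_tendsto_rnDeriv μ ν, Measure.rnDeriv_lt_top μ ν]
    with x hlim hfin
  lift μ.rnDeriv ν x to ℝ≥0 using hfin.ne with L
  refine ⟨L + 1, by positivity, ?_⟩
  filter_upwards [hlim.eventually_lt_const (ENNReal.coe_lt_coe.2 (lt_add_one L))] with r hr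
  exact (ENNReal.div_le_iff_le_mul (Or.inr ENNReal.coe_ne_top) (Or.inr (by simp))).1 hr.le

section FiniteDimensional

variable {E : Type*} [NormedAddCommGroup E] [NormedSpace ℝ E] [FiniteDimensional ℝ E]
  [MeasurableSpace E] [BorelSpace E] (μ : Measure E) [IsFiniteMeasure μ]

lemma toReal_addHaar_closedBall (ν : Measure E) [ν.IsAddHaarMeasure] (x : E) {r : ℝ}
    (hr : 0 ≤ r) :
    (ν (closedBall x r)).toReal = (ν (ball (0 : E) 1)).toReal * r ^ (finrank ℝ E : ℝ) := by
  rw [Measure.addHaar_closedBall ν x hr, ENNReal.toReal_mul, ENNReal.toReal_ofReal (by positivity),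
    Real.rpow_natCast, mul_comm]

lemma ae_locDim_le_finrank : ∀ᵐ x ∂μ, locDim μ x ≤ (finrank ℝ E : ℝ) := by
  set ν : Measure E := Measure.addHaar
  filter_upwards [ae_exists_eventually_measure_closedBall_le ν μ] with x ⟨K, hK, hle⟩
  have hV : 0 < (ν (ball (0 : E) 1)).toReal :=
    ENNReal.toReal_pos (measure_ball_pos ν 0 one_pos).ne' measure_ball_lt_top.ne
  refine locDim_le_of_eventually_le
    (C := (ν (ball (0 : E) 1)).toReal / (K * 2 ^ (finrank ℝ E : ℝ))) (by positivity) ?_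
  filter_upwards [tendsto_half_nhdsGT_zero.eventually hle, self_mem_nhdsWithin]
    with r hr (hr0 : 0 < r)
  have hball : ν (closedBall x (r / 2)) ≤ K * μ (ball x r) :=
    hr.trans (by gcongr; exact closedBall_subset_ball (half_lt_self hr0))
  have := ENNReal.toReal_mono (by finiteness) hball
  rw [toReal_addHaar_closedBall ν x (by positivity), ENNReal.toReal_mul, ENNReal.coe_toReal,
    Real.div_rpow hr0.le zero_le_two, mul_div_assoc', div_le_iff₀ (by positivity)] at this
  rw [div_mul_eq_mul_div, div_le_iff₀ (by positivity)]
  linarith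

lemma ae_finrank_le_locDim (ν : Measure E) [ν.IsAddHaarMeasure] :
    ∀ᵐ x ∂ν, x ∈ msupp μ → ((finrank ℝ E : ℝ) : EReal) ≤ locDim μ x := by
  filter_upwards [ae_exists_eventually_measure_closedBall_le μ ν] with x ⟨K, hK, hle⟩ hx
  have hV : 0 < (ν (ball (0 : E) 1)).toReal :=
    ENNReal.toReal_pos (measure_ball_pos ν 0 one_pos).ne' measure_ball_lt_top.ne
  refine le_locDim_of_eventually_le hx (C := K * (ν (ball (0 : E) 1)).toReal)
    (by positivity) ?_
  filter_upwards [hle, self_mem_nhdsWithin] with r hr (hr0 : 0 < r)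
  have := ENNReal.toReal_mono (ENNReal.mul_ne_top ENNReal.coe_ne_top measure_closedBall_lt_top.ne)
    ((measure_mono ball_subset_closedBall).trans hr)
  rwa [ENNReal.toReal_mul, ENNReal.coe_toReal, toReal_addHaar_closedBall ν x hr0.le,
    ← mul_assoc] at this

theorem locDim_eq_finrank_of_continuousOn {U : Set E} (hU : IsOpen U) (hUμ : U ⊆ msupp μ)
    (hcont : ContinuousOn (locDim μ) U) : ∀ x ∈ U, locDim μ x = (finrank ℝ E : ℝ) := by
  have hlow : U ∩ locDim μ ⁻¹' Iio (finrank ℝ E : ℝ) = ∅ := by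
    refine ((hcont.isOpen_inter_preimage hU isOpen_Iio).measure_eq_zero_iff Measure.addHaar).1 ?_
    refine measure_mono_null (fun x ⟨hxU, hx⟩ => ?_)
      (ae_iff.1 (ae_finrank_le_locDim μ Measure.addHaar))
    exact fun h => not_le.2 hx (h (hUμ hxU))
  have hhigh : U ∩ locDim μ ⁻¹' Ioi (finrank ℝ E : ℝ) = ∅ := by
    refine eq_empty_of_isOpen_of_subset_msupp (hcont.isOpen_inter_preimage hU isOpen_Ioi)
      (inter_subset_left.trans hUμ) ?_
    exact measure_mono_null (fun x ⟨_, hx⟩ => not_le.2 hx) (ae_iff.1 (ae_locDim_le_finrank μ))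
  intro x hx
  exact le_antisymm (not_lt.1 fun h => hhigh.subset ⟨hx, h⟩)
    (not_lt.1 fun h => hlow.subset ⟨hx, h⟩)

end FiniteDimensional

theorem locDim_eq_dim_of_continuousOn_general (d : ℕ) (μ : Measure (Rd d)) [IsProbabilityMeasure μ]
    (a : Rd d) (r : ℝ) (U : Set (Rd d))
    (hU : U = {x : Rd d | ∀ i, x i ∈ Set.Ioo (a i) (a i + r)})
    (hsupp : U ⊆ msupp μ)
    (hcont : ContinuousOn (locDim μ) U) :
    ∀ x ∈ U, locDim μ x = ((d : ℝ) : EReal) := by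
  have hUopen : IsOpen U := by
    rw [hU, ofPred_forall]
    exact isOpen_iInter_of_finite fun i => isOpen_Ioo.preimage (EuclideanSpace.proj i).continuous
  simpa using locDim_eq_finrank_of_continuousOn μ hUopen hsupp hcont

/-- If the support of a probability measure `μ` on `ℝ^d` contains an open cube
`U` and `x ↦ h_μ(x)` is continuous on `U`, then `h_μ ≡ d` on `U`. -/
theorem locDim_eq_dim_of_continuousOn (d : ℕ) (μ : Measure (Rd d)) [IsProbabilityMeasure μ]
    (a : Rd d) (r : ℝ) (hr : 0 < r) (U : Set (Rd d))
    (hU : U = {x : Rd d | ∀ i, x i ∈ Set.Ioo (a i) (a i + r)})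
    (hsupp : U ⊆ msupp μ)
    (hcont : ContinuousOn (locDim μ) U) :
    ∀ x ∈ U, locDim μ x = ((d : ℝ) : EReal) :=
  locDim_eq_dim_of_continuousOn_general d μ a r U hU hsupp hcont
end
end

section
/- For every Borel probability measure μ on ℝ^d and every H ≥ 0, the Hausdorff dimension of the level set E_μ(H) = {x ∈ Supp(μ) : h_μ(x) = H} satisfies dim_H E_μ(H) ≤ min(H, d) (with the convention dim ∅ = -∞). -/
open MeasureTheory Filter Set Metric Topology ENNReal

noncomputable section
open scoped Classical

/-! The bound by `d` is the dimension of the ambient space. For the bound by `H`, take `s > H`: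
every point of the level set has arbitrarily small radii with `μ(B(x,r)) ≥ r^s`. A Vitali
subfamily of disjoint such balls, enlarged fourfold, covers the level set, and its `s`-cost is at
most `8^s μ(ℝ^d)`; hence `μH[s]` of the level set is finite and its dimension is at most `s`. -/

open scoped NNReal

theorem Set.PairwiseDisjoint.countable_of_measure_pos {α ι : Type*} [MeasurableSpace α]
    {μ : Measure α} [SFinite μ] {u : Set ι} {f : ι → Set α} (hd : u.PairwiseDisjoint f)
    (hf : ∀ i ∈ u, MeasurableSet (f i)) (hpos : ∀ i ∈ u, 0 < μ (f i)) : u.Countable := by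
  have hcount := Measure.countable_meas_pos_of_disjoint_iUnion (μ := μ)
    (As := fun i : u => f i) (fun i => hf i i.2)
    fun i j hij => hd i.2 j.2 (Subtype.coe_ne_coe.2 hij)
  rw [eq_univ_of_forall (s := {i : u | 0 < μ (f i)}) fun i => hpos i i.2,
    countable_univ_iff] at hcount
  exact countable_coe_iff.1 hcount

theorem ediam_closedBall_le {X : Type*} [PseudoMetricSpace X] (x : X) {r : ℝ} (hr : 0 ≤ r) :
    ediam (closedBall x r) ≤ ENNReal.ofReal (2 * r) := by
  rw [← closedEBall_ofReal hr, ENNReal.ofReal_mul zero_le_two, ENNReal.ofReal_ofNat]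
  exact ediam_closedEBall_le

theorem ediam_closedBall_rpow_le {X : Type*} [PseudoMetricSpace X] (x : X) {c r s : ℝ}
    (hc : 0 ≤ c) (hr : 0 ≤ r) (hs : 0 ≤ s) :
    ediam (closedBall x (c * r)) ^ s ≤ ENNReal.ofReal ((2 * c) ^ s) * ENNReal.ofReal (r ^ s) :=
  calc ediam (closedBall x (c * r)) ^ s ≤ ENNReal.ofReal (2 * (c * r)) ^ s := by
        gcongr; exact ediam_closedBall_le x (by positivity)
    _ = ENNReal.ofReal ((2 * c) ^ s) * ENNReal.ofReal (r ^ s) := by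
      rw [ENNReal.ofReal_rpow_of_nonneg (by positivity) hs, ← mul_assoc,
        Real.mul_rpow (by positivity) hr, ENNReal.ofReal_mul (by positivity)]

section MassDistribution

variable {X : Type*} [MetricSpace X] [MeasurableSpace X] [BorelSpace X]
  {μ : Measure X} {E : Set X} {s : ℝ}

theorem exists_countable_disjoint_closedBall_cover [SFinite μ]
    (hE : ∀ x ∈ E, ∃ᶠ r in 𝓝[>] 0, ENNReal.ofReal (r ^ s) ≤ μ (ball x r))
    {δ : ℝ} (hδ : 0 < δ) :
    ∃ u : Set (X × ℝ), u.Countable ∧ u.PairwiseDisjoint (fun p => closedBall p.1 p.2) ∧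
      (∀ p ∈ u, 0 < p.2 ∧ p.2 ≤ δ ∧ ENNReal.ofReal (p.2 ^ s) ≤ μ (ball p.1 p.2)) ∧
      E ⊆ ⋃ p ∈ u, closedBall p.1 (4 * p.2) := by
  set t : Set (X × ℝ) :=
    {p | p.1 ∈ E ∧ 0 < p.2 ∧ p.2 ≤ δ ∧ ENNReal.ofReal (p.2 ^ s) ≤ μ (ball p.1 p.2)}
  obtain ⟨u, hut, hdisj, hcover⟩ :=
    Vitali.exists_disjoint_subfamily_covering_enlargement_closedBall t Prod.fst Prod.snd δ
      (fun p hp => hp.2.2.1) 4 (by norm_num)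
  refine ⟨u, hdisj.countable_of_measure_pos (μ := μ) (fun _ _ => measurableSet_closedBall)
    fun p hp => ?_, hdisj, fun p hp => (hut hp).2, fun x hx => ?_⟩
  · obtain ⟨-, hp0, -, hpμ⟩ := hut hp
    calc 0 < ENNReal.ofReal (p.2 ^ s) := ENNReal.ofReal_pos.2 (Real.rpow_pos_of_pos hp0 s)
      _ ≤ μ (ball p.1 p.2) := hpμ
      _ ≤ μ (closedBall p.1 p.2) := measure_mono ball_subset_closedBall
  · obtain ⟨r, hrμ, hr⟩ := ((hE x hx).and_eventually (Ioc_mem_nhdsGT hδ)).exists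
    obtain ⟨q, hqu, hsub⟩ := hcover (x, r) ⟨hx, hr.1, hr.2, hrμ⟩
    exact mem_biUnion hqu (hsub (mem_closedBall_self hr.1.le))

theorem tsum_ediam_closedBall_rpow_le [IsFiniteMeasure μ] (hs : 0 ≤ s) {u : Set (X × ℝ)}
    (hu : u.Countable) (hdisj : u.PairwiseDisjoint (fun p => closedBall p.1 p.2))
    (hball : ∀ p ∈ u, 0 < p.2 ∧ ENNReal.ofReal (p.2 ^ s) ≤ μ (ball p.1 p.2)) :
    ∑' p : u, ediam (closedBall p.1.1 (4 * p.1.2)) ^ s ≤ ENNReal.ofReal (8 ^ s) * μ univ := by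
  calc ∑' p : u, ediam (closedBall p.1.1 (4 * p.1.2)) ^ s
      ≤ ∑' p : u, ENNReal.ofReal (8 ^ s) * μ (closedBall p.1.1 p.1.2) := by
        refine ENNReal.tsum_le_tsum fun p => ?_
        obtain ⟨hp0, hpμ⟩ := hball p p.2
        calc ediam (closedBall p.1.1 (4 * p.1.2)) ^ s
            ≤ ENNReal.ofReal ((2 * 4) ^ s) * ENNReal.ofReal (p.1.2 ^ s) :=
              ediam_closedBall_rpow_le _ (by norm_num) hp0.le hs
          _ ≤ ENNReal.ofReal (8 ^ s) * μ (closedBall p.1.1 p.1.2) := by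
              norm_num only
              gcongr
              exact hpμ.trans (measure_mono ball_subset_closedBall)
    _ = ENNReal.ofReal (8 ^ s) * μ (⋃ p ∈ u, closedBall p.1 p.2) := by
        rw [ENNReal.tsum_mul_left, measure_biUnion hu hdisj fun _ _ => measurableSet_closedBall]
    _ ≤ ENNReal.ofReal (8 ^ s) * μ univ := by gcongr; exact subset_univ _

theorem hausdorffMeasure_le_of_frequently_rpow_le_measure_ball [IsFiniteMeasure μ] (hs : 0 ≤ s)
    (hE : ∀ x ∈ E, ∃ᶠ r in 𝓝[>] 0, ENNReal.ofReal (r ^ s) ≤ μ (ball x r)) :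
    μH[s] E ≤ ENNReal.ofReal (8 ^ s) * μ univ := by
  choose u hu hdisj hball hcover using fun n : ℕ =>
    exists_countable_disjoint_closedBall_cover hE (Nat.one_div_pos_of_nat (n := n))
  have := fun n => (hu n).to_subtype
  refine (Measure.hausdorffMeasure_le_liminf_tsum s E (l := atTop)
    (fun n : ℕ => ENNReal.ofReal (8 * (1 / (n + 1)))) ?_
    (fun n (p : u n) => closedBall p.1.1 (4 * p.1.2)) ?_ ?_).trans ?_
  · simpa using ENNReal.tendsto_ofReal (tendsto_one_div_add_atTop_nhds_zero_nat.const_mul 8)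
  · refine Eventually.of_forall fun n p => ?_
    obtain ⟨hp0, hpδ, -⟩ := hball n p p.2
    calc ediam (closedBall p.1.1 (4 * p.1.2)) ≤ ENNReal.ofReal (2 * (4 * p.1.2)) :=
          ediam_closedBall_le _ (by positivity)
      _ ≤ ENNReal.ofReal (8 * (1 / (n + 1))) := ENNReal.ofReal_le_ofReal (by linarith)
  · exact Eventually.of_forall fun n x hx => by simpa [iUnion_subtype] using hcover n hx
  · exact liminf_le_of_frequently_le' <| Frequently.of_forall fun n =>
      tsum_ediam_closedBall_rpow_le hs (hu n) (hdisj n) fun p hp =>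
        ⟨(hball n p hp).1, (hball n p hp).2.2⟩

theorem dimH_le_of_frequently_rpow_le_measure_ball [IsFiniteMeasure μ] {d : ℝ≥0}
    (hE : ∀ x ∈ E, ∃ᶠ r in 𝓝[>] 0, ENNReal.ofReal (r ^ (d : ℝ)) ≤ μ (ball x r)) :
    dimH E ≤ d :=
  dimH_le_of_hausdorffMeasure_ne_top <| ne_top_of_le_ne_top (by finiteness)
    (hausdorffMeasure_le_of_frequently_rpow_le_measure_ball d.2 hE)

end MassDistribution

section LocalDimension

variable {X : Type*} [MetricSpace X] [MeasurableSpace X] {μ : Measure X}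

theorem frequently_rpow_le_measure_ball_of_locDim_lt {x : X} (hx : x ∈ msupp μ) {s : ℝ}
    (hs : locDim μ x < s) : ∃ᶠ r in 𝓝[>] 0, ENNReal.ofReal (r ^ s) ≤ μ (ball x r) := by
  have hfreq : ∃ᶠ r in 𝓝[>] 0, Real.log (μ (ball x r)).toReal / Real.log r < s :=
    (frequently_lt_of_liminf_lt (by isBoundedDefault) hs).mono fun _ hr =>
      EReal.coe_lt_coe_iff.1 hr
  refine (hfreq.and_eventually (Ioo_mem_nhdsGT one_pos)).mono fun r ⟨hrs, hr0, hr1⟩ => ?_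
  rcases eq_or_ne (μ (ball x r)) ∞ with htop | htop
  · simp [htop]
  -- `x ∈ msupp μ` rules out the junk value `Real.log 0 = 0`
  have hm : 0 < (μ (ball x r)).toReal := ENNReal.toReal_pos (hx r hr0).ne' htop
  have hlog : s * Real.log r < Real.log (μ (ball x r)).toReal :=
    (div_lt_iff_of_neg (Real.log_neg hr0 hr1)).1 hrs
  rw [← ENNReal.ofReal_toReal htop, ← Real.exp_log hm, Real.rpow_def_of_pos hr0, mul_comm]
  exact ENNReal.ofReal_le_ofReal (Real.exp_le_exp.2 hlog.le)

theorem dimH_le_of_forall_locDim_le [BorelSpace X] [IsFiniteMeasure μ] {E : Set X} {H : ℝ}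
    (hE : ∀ x ∈ E, x ∈ msupp μ ∧ locDim μ x ≤ H) : dimH E ≤ ENNReal.ofReal H := by
  refine le_of_forall_gt_imp_ge_of_dense fun c hc => ?_
  obtain ⟨s, hHs, hsc⟩ := ENNReal.lt_iff_exists_nnreal_btwn.1 hc
  rw [← ENNReal.ofReal_coe_nnreal, ENNReal.ofReal_lt_ofReal_iff'] at hHs
  refine (dimH_le_of_frequently_rpow_le_measure_ball (μ := μ) fun x hx => ?_).trans hsc.le
  exact frequently_rpow_le_measure_ball_of_locDim_lt (hE x hx).1
    ((hE x hx).2.trans_lt (EReal.coe_lt_coe hHs.1))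

theorem specM_le_dimH (μ : Measure X) (H : ℝ) :
    specM μ H ≤ (dimH {x | x ∈ msupp μ ∧ locDim μ x = H} : EReal) := by
  unfold specM
  split_ifs
  exacts [bot_le, le_rfl]

end LocalDimension

/-- For every Borel probability measure `μ` on `ℝ^d` and `H ≥ 0`,
`dim_H E_μ(H) ≤ min (H, d)`, with the convention `dim ∅ = -∞`. -/
theorem specM_le_min (d : ℕ) (μ : Measure (Rd d)) [IsProbabilityMeasure μ]
    (H : ℝ) (hH : 0 ≤ H) :
    specM μ H ≤ min ((H : ℝ) : EReal) (((d : ℝ) : ℝ) : EReal) := by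
  set E := {x | x ∈ msupp μ ∧ locDim μ x = (H : EReal)}
  have hdimH : dimH E ≤ ENNReal.ofReal H :=
    dimH_le_of_forall_locDim_le fun x hx => ⟨hx.1, hx.2.le⟩
  have hdimd : dimH E ≤ d := by
    simpa [Real.dimH_univ_eq_finrank] using dimH_mono (subset_univ E)
  refine (specM_le_dimH μ H).trans (le_min ?_ ?_)
  · calc (dimH E : EReal) ≤ (ENNReal.ofReal H : EReal) :=
          EReal.coe_ennreal_le_coe_ennreal_iff.2 hdimH
      _ = H := by rw [EReal.coe_ennreal_ofReal, max_eq_left hH]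
  · calc (dimH E : EReal) ≤ ((d : ℝ≥0∞) : EReal) :=
          EReal.coe_ennreal_le_coe_ennreal_iff.2 hdimd
      _ = (d : ℝ) := by norm_cast
end
end

section
/- Let μ be a Borel probability measure on [0,1]^d and let F_μ be the function whose wavelet coefficients are d_λ = μ(λ). Then the wavelet-leader L^q-scaling function of F_μ equals the L^q-spectrum of μ: L_{F_μ}(q) = τ_μ(q) for every q ∈ ℝ. -/
open MeasureTheory Filter Set Metric Topology ENNReal

noncomputable section
open scoped Classical

/-- The closed dyadic cube `2^{-j} k + [0, 2^{-j}]^d` of generation `j`. -/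
def dyadicCube {d : ℕ} (j : ℕ) (k : Fin d → ℤ) : Set (Rd d) :=
  {x | ∀ i, (k i : ℝ) * 2 ^ (-(j : ℝ)) ≤ x i ∧ x i ≤ ((k i : ℝ) + 1) * 2 ^ (-(j : ℝ))}

/-- The unit cube `[0,1]^d`. -/
def unitCube (d : ℕ) : Set (Rd d) := {x | ∀ i, x i ∈ Set.Icc (0 : ℝ) 1}

/-- Extended logarithm on `ℝ≥0∞`. -/
def elog (x : ℝ≥0∞) : EReal :=
  if x = 0 then ⊥ else if x = ⊤ then ⊤ else ((Real.log x.toReal : ℝ) : EReal)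

/-- `∑_{λ ∈ 𝒟_j, μ(λ) ≠ 0} μ(λ)^q`. -/
def tauSum {d : ℕ} (μ : Measure (Rd d)) (q : ℝ) (j : ℕ) : ℝ≥0∞ :=
  ∑' k : Fin d → ℤ, if μ (dyadicCube j k) = 0 then 0 else μ (dyadicCube j k) ^ q

/-- The `L^q`-spectrum `τ_μ(q) = liminf_{j→∞} (-1/j) log₂ ∑_{λ∈𝒟_j, μ(λ)≠0} μ(λ)^q`. -/
def tauMu {d : ℕ} (μ : Measure (Rd d)) (q : ℝ) : EReal :=
  Filter.liminf
    (fun j : ℕ =>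
      (((-1 : ℝ) / (j : ℝ) : ℝ) : EReal) *
        (elog (tauSum μ q j) / ((Real.log 2 : ℝ) : EReal)))
    atTop

/-- The cube `3λ`, with the same center as the dyadic cube `λ` of generation `j`
and three times its side length. -/
def cube3 {d : ℕ} (j : ℕ) (k : Fin d → ℤ) : Set (Rd d) :=
  {x | ∀ i, ((k i : ℝ) - 1) * 2 ^ (-(j : ℝ)) ≤ x i ∧ x i ≤ ((k i : ℝ) + 2) * 2 ^ (-(j : ℝ))}

/-- The wavelet leader of `F_μ` at the dyadic cube `λ = (j,k)`, when the wavelet coefficients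
are `d_λ = μ(λ)`: `d^L_λ = sup {μ(λ') : λ' ⊆ 3λ}`. -/
def mleader {d : ℕ} (μ : Measure (Rd d)) (j : ℕ) (k : Fin d → ℤ) : ℝ≥0∞ :=
  ⨆ (j' : ℕ) (k' : Fin d → ℤ) (_ : dyadicCube j' k' ⊆ cube3 j k), μ (dyadicCube j' k')

/-- `∑_{λ ∈ 𝒟_j, d^L_λ ≠ 0} (d^L_λ)^q`. -/
def leaderSum {d : ℕ} (μ : Measure (Rd d)) (q : ℝ) (j : ℕ) : ℝ≥0∞ :=
  ∑' k : Fin d → ℤ, if mleader μ j k = 0 then 0 else mleader μ j k ^ q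

/-- The wavelet-leader `L^q`-scaling function
`L_{F_μ}(q) = liminf_j (-1/j) log₂ ∑_{λ∈𝒟_j, d^L_λ≠0} (d^L_λ)^q`. -/
def leaderScaling {d : ℕ} (μ : Measure (Rd d)) (q : ℝ) : EReal :=
  Filter.liminf
    (fun j : ℕ =>
      (((-1 : ℝ) / (j : ℝ) : ℝ) : EReal) *
        (elog (leaderSum μ q j) / ((Real.log 2 : ℝ) : EReal)))
    atTop

/-!
Since `μ(λ') ≤ μ(λ)` for `λ' ⊆ λ` and `3λ` is covered by the `3^d` dyadic neighbours of `λ`,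
the leader `d^L_λ` lies between `μ(λ)` and `3^d` times the largest mass of a neighbour.
For `q ≥ 0` this gives `∑ μ(λ)^q ≤ ∑ (d^L_λ)^q ≤ 3^{d(q+1)} ∑ μ(λ)^q` at every generation.
For `q ≤ 0` a charged neighbour `λ' ⊆ 3λ` has `μ(λ') ≤ d^L_λ`, whence `∑ (d^L_λ)^q ≤ 3^d ∑ μ(λ)^q`.
Conversely, every charged `λ` of generation `j` has a grandchild `λ''` with `3λ'' ⊆ λ` and a
charged child of `λ` inside `3λ''`; then `0 < d^L_{λ''} ≤ μ(λ)`, and `λ ↦ λ''` is injective, so the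
sum of generation `j` is bounded by the leader sum of generation `j + 2`.
Constant factors and a bounded shift of the generation do not change `liminf (-1/j) log₂`.
-/

-- Excluding `0` matters for `q < 0`, where `0 ^ q = ⊤` in `ℝ≥0∞`.
def rpowOnSupport (q : ℝ) (x : ℝ≥0∞) : ℝ≥0∞ := if x = 0 then 0 else x ^ q

section RpowOnSupport

variable {q : ℝ} {x y : ℝ≥0∞}

lemma rpowOnSupport_of_ne_zero (hx : x ≠ 0) : rpowOnSupport q x = x ^ q := if_neg hx

lemma rpowOnSupport_mono (hq : 0 ≤ q) : Monotone (rpowOnSupport q) := by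
  intro x y hxy
  by_cases hx : x = 0
  · simp [rpowOnSupport, hx]
  rw [rpowOnSupport_of_ne_zero hx, rpowOnSupport_of_ne_zero (ne_bot_of_le_ne_bot hx hxy)]
  exact ENNReal.rpow_le_rpow hxy hq

lemma rpowOnSupport_le_of_le_of_nonpos (hq : q ≤ 0) (hx : x ≠ 0) (hxy : x ≤ y) :
    rpowOnSupport q y ≤ rpowOnSupport q x := by
  rw [rpowOnSupport_of_ne_zero hx, rpowOnSupport_of_ne_zero (ne_bot_of_le_ne_bot hx hxy)]
  simpa only [ENNReal.rpow_neg, inv_inv] using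
    ENNReal.inv_le_inv.mpr (ENNReal.rpow_le_rpow hxy (neg_nonneg.mpr hq))

lemma rpowOnSupport_mul (hq : 0 ≤ q) {c : ℝ≥0∞} (hc : c ≠ 0) :
    rpowOnSupport q (c * x) = c ^ q * rpowOnSupport q x := by
  by_cases hx : x = 0
  · simp [rpowOnSupport, hx]
  rw [rpowOnSupport_of_ne_zero hx, rpowOnSupport_of_ne_zero (mul_ne_zero hc hx),
    ENNReal.mul_rpow_of_nonneg _ _ hq]

lemma rpowOnSupport_ne_top (hx : x ≠ ⊤) : rpowOnSupport q x ≠ ⊤ := by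
  by_cases h0 : x = 0
  · simp [rpowOnSupport, h0]
  rw [rpowOnSupport_of_ne_zero h0]
  exact ENNReal.rpow_ne_top_of_ne_zero h0 hx

lemma rpowOnSupport_ne_zero (h0 : x ≠ 0) (hx : x ≠ ⊤) : rpowOnSupport q x ≠ 0 := by
  rw [rpowOnSupport_of_ne_zero h0]
  exact (ENNReal.rpow_pos (pos_iff_ne_zero.mpr h0) hx).ne'

lemma tsum_rpowOnSupport_ne_top {ι : Type*} {f : ι → ℝ≥0∞} (s : Finset ι)
    (hs : ∀ i ∉ s, f i = 0) (hf : ∀ i, f i ≠ ⊤) : ∑' i, rpowOnSupport q (f i) ≠ ⊤ := by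
  rw [tsum_eq_sum (s := s) fun i hi => by simp [rpowOnSupport, hs i hi]]
  exact ENNReal.sum_ne_top.mpr fun i _ => rpowOnSupport_ne_top (hf i)

lemma tsum_rpowOnSupport_ne_zero {ι : Type*} {f : ι → ℝ≥0∞} (i : ι) (h0 : f i ≠ 0)
    (hf : f i ≠ ⊤) : ∑' i, rpowOnSupport q (f i) ≠ 0 :=
  fun h => rpowOnSupport_ne_zero h0 hf (ENNReal.tsum_eq_zero.mp h i)

end RpowOnSupport

lemma tsum_sum_add_eq_card_mul {G : Type*} [AddCommGroup G] (f : G → ℝ≥0∞) (s : Finset G) :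
    ∑' k, ∑ e ∈ s, f (k + e) = s.card * ∑' k, f k := by
  have hshift (e : G) : ∑' k, f (k + e) = ∑' k, f k := (Equiv.addRight e).tsum_eq f
  rw [Summable.tsum_finsetSum fun _ _ => ENNReal.summable,
    Finset.sum_congr rfl fun e _ => hshift e, Finset.sum_const, nsmul_eq_mul]

section DyadicGeometry

variable {d : ℕ}

lemma two_rpow_neg_natCast (j : ℕ) : (2 : ℝ) ^ (-(j : ℝ)) = ((2 : ℝ) ^ j)⁻¹ := by
  rw [Real.rpow_neg zero_le_two, Real.rpow_natCast]

lemma mem_dyadicCube_iff {j : ℕ} {k : Fin d → ℤ} {x : Rd d} :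
    x ∈ dyadicCube j k ↔ ∀ i, (k i : ℝ) ≤ 2 ^ j * x i ∧ 2 ^ j * x i ≤ k i + 1 := by
  have h2j : (0 : ℝ) < 2 ^ j := by positivity
  simp only [dyadicCube, Set.mem_ofPred_eq, two_rpow_neg_natCast, ← div_eq_mul_inv,
    div_le_iff₀ h2j, le_div_iff₀ h2j, mul_comm _ ((2 : ℝ) ^ j)]

lemma mem_cube3_iff {j : ℕ} {k : Fin d → ℤ} {x : Rd d} :
    x ∈ cube3 j k ↔ ∀ i, (k i : ℝ) - 1 ≤ 2 ^ j * x i ∧ 2 ^ j * x i ≤ k i + 2 := by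
  have h2j : (0 : ℝ) < 2 ^ j := by positivity
  simp only [cube3, Set.mem_ofPred_eq, two_rpow_neg_natCast, ← div_eq_mul_inv,
    div_le_iff₀ h2j, le_div_iff₀ h2j, mul_comm _ ((2 : ℝ) ^ j)]

lemma exists_int_mem_Icc_le_le_add_one {a b : ℤ} (hab : a < b) {y : ℝ}
    (hy : (a : ℝ) ≤ y ∧ y ≤ b) : ∃ n ∈ Finset.Icc a (b - 1), (n : ℝ) ≤ y ∧ y ≤ n + 1 := by
  obtain ⟨hay, hyb⟩ := hy
  rcases le_or_gt ⌊y⌋ (b - 1) with hfl | hfl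
  · refine ⟨⌊y⌋, Finset.mem_Icc.mpr ⟨Int.le_floor.mpr hay, hfl⟩, Int.floor_le y,
      (Int.lt_floor_add_one y).le⟩
  · refine ⟨b - 1, Finset.mem_Icc.mpr ⟨by omega, le_rfl⟩, ?_, by push_cast; linarith⟩
    have : ((b - 1 : ℤ) : ℝ) ≤ ⌊y⌋ := by exact_mod_cast hfl.le
    linarith [Int.floor_le y]

lemma exists_mem_dyadicCube_add {j : ℕ} {c : Fin d → ℤ} {a b : ℤ} (hab : a < b) {x : Rd d}
    (hx : ∀ i, (a : ℝ) ≤ 2 ^ j * x i - c i ∧ 2 ^ j * x i - c i ≤ b) :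
    ∃ e ∈ Fintype.piFinset fun _ : Fin d => Finset.Icc a (b - 1), x ∈ dyadicCube j (c + e) := by
  choose e he hxe using fun i => exists_int_mem_Icc_le_le_add_one hab (hx i)
  refine ⟨e, Fintype.mem_piFinset.mpr he, mem_dyadicCube_iff.mpr fun i => ?_⟩
  simp only [Pi.add_apply, Int.cast_add]
  constructor <;> linarith [hxe i]

lemma iUnion_dyadicCube (j : ℕ) : ⋃ k : Fin d → ℤ, dyadicCube j k = univ := by
  refine eq_univ_of_forall fun x => mem_iUnion.mpr ⟨fun i => ⌊2 ^ j * x i⌋, ?_⟩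
  exact mem_dyadicCube_iff.mpr fun i => ⟨Int.floor_le _, (Int.lt_floor_add_one _).le⟩

def neighborOffsets (d : ℕ) : Finset (Fin d → ℤ) := Fintype.piFinset fun _ => Finset.Icc (-1) 1

def childOffsets (d : ℕ) : Finset (Fin d → ℤ) := Fintype.piFinset fun _ => Finset.Icc 0 1

lemma mem_neighborOffsets {e : Fin d → ℤ} : e ∈ neighborOffsets d ↔ ∀ i, -1 ≤ e i ∧ e i ≤ 1 := by
  simp [neighborOffsets]

lemma mem_childOffsets {e : Fin d → ℤ} : e ∈ childOffsets d ↔ ∀ i, 0 ≤ e i ∧ e i ≤ 1 := by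
  simp [childOffsets]

lemma card_neighborOffsets : (neighborOffsets d).card = 3 ^ d := by
  simp [neighborOffsets, Fintype.card_piFinset]

lemma dyadicCube_add_subset_cube3 {j : ℕ} (k : Fin d → ℤ) {e : Fin d → ℤ}
    (he : e ∈ neighborOffsets d) : dyadicCube j (k + e) ⊆ cube3 j k := by
  intro x hx
  rw [mem_cube3_iff]
  intro i
  have hei : (-1 : ℝ) ≤ e i ∧ (e i : ℝ) ≤ 1 := by exact_mod_cast mem_neighborOffsets.mp he i
  have := mem_dyadicCube_iff.mp hx i
  simp only [Pi.add_apply, Int.cast_add] at this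
  constructor <;> linarith

lemma dyadicCube_subset_cube3 (j : ℕ) (k : Fin d → ℤ) : dyadicCube j k ⊆ cube3 j k := by
  simpa using dyadicCube_add_subset_cube3 (j := j) k (e := 0) (by simp [neighborOffsets])

lemma cube3_subset_biUnion (j : ℕ) (k : Fin d → ℤ) :
    cube3 j k ⊆ ⋃ e ∈ neighborOffsets d, dyadicCube j (k + e) := by
  intro x hx
  obtain ⟨e, he, hxe⟩ := exists_mem_dyadicCube_add (x := x) (j := j) (c := k) (a := -1)
    (b := 2) (by norm_num) fun i => by
      have := mem_cube3_iff.mp hx i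
      push_cast
      constructor <;> linarith
  exact mem_biUnion he hxe

lemma dyadicCube_subset_biUnion_children (j : ℕ) (k : Fin d → ℤ) :
    dyadicCube j k ⊆ ⋃ e ∈ childOffsets d, dyadicCube (j + 1) (2 • k + e) := by
  intro x hx
  obtain ⟨e, he, hxe⟩ := exists_mem_dyadicCube_add (x := x) (j := j + 1) (c := 2 • k) (a := 0)
    (b := 2) (by norm_num) fun i => by
      have := mem_dyadicCube_iff.mp hx i
      simp only [Pi.smul_apply, nsmul_eq_mul, pow_succ]
      push_cast
      constructor <;> linarith
  exact mem_biUnion he hxe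

lemma cube3_grandchild_subset (j : ℕ) (k : Fin d → ℤ) {e : Fin d → ℤ}
    (he : e ∈ childOffsets d) : cube3 (j + 2) (4 • k + 1 + e) ⊆ dyadicCube j k := by
  intro x hx
  rw [mem_dyadicCube_iff]
  intro i
  have hei : (0 : ℝ) ≤ e i ∧ (e i : ℝ) ≤ 1 := by exact_mod_cast mem_childOffsets.mp he i
  have := mem_cube3_iff.mp hx i
  simp only [Pi.add_apply, Pi.one_apply, nsmul_eq_mul, Pi.mul_apply, Pi.natCast_apply,
    pow_add] at this
  push_cast at this
  constructor <;> linarith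

lemma dyadicCube_child_subset_cube3_grandchild (j : ℕ) (k : Fin d → ℤ) {e : Fin d → ℤ}
    (he : e ∈ childOffsets d) :
    dyadicCube (j + 1) (2 • k + e) ⊆ cube3 (j + 2) (4 • k + 1 + e) := by
  intro x hx
  rw [mem_cube3_iff]
  intro i
  have hei : (0 : ℝ) ≤ e i ∧ (e i : ℝ) ≤ 1 := by exact_mod_cast mem_childOffsets.mp he i
  have := mem_dyadicCube_iff.mp hx i
  simp only [Pi.add_apply, Pi.one_apply, nsmul_eq_mul, Pi.mul_apply, Pi.natCast_apply,
    pow_succ] at this ⊢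
  push_cast at this ⊢
  constructor <;> linarith

lemma dyadicCube_subset_compl_unitCube {j : ℕ} {k : Fin d → ℤ}
    (hk : k ∉ Fintype.piFinset fun _ : Fin d => Finset.Icc (-1) (2 ^ j)) :
    dyadicCube j k ⊆ (unitCube d)ᶜ := by
  intro x hx hxu
  refine hk (Fintype.mem_piFinset.mpr fun i => Finset.mem_Icc.mpr ?_)
  obtain ⟨h0, h1⟩ := hxu i
  obtain ⟨hk1, hk2⟩ := mem_dyadicCube_iff.mp hx i
  have hpos : (0 : ℝ) < 2 ^ j := pow_pos two_pos j
  have hlo : (-2 : ℝ) < k i := by nlinarith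
  have hhi : (k i : ℝ) ≤ (2 ^ j : ℤ) := by push_cast; nlinarith
  constructor
  · have : (-2 : ℤ) < k i := by exact_mod_cast hlo
    omega
  · exact_mod_cast hhi

end DyadicGeometry

section Leaders

variable {d : ℕ} (μ : Measure (Rd d))

lemma measure_le_mleader {j j' : ℕ} {k k' : Fin d → ℤ} (h : dyadicCube j' k' ⊆ cube3 j k) :
    μ (dyadicCube j' k') ≤ mleader μ j k :=
  le_iSup₂_of_le j' k' (le_iSup_of_le h le_rfl)

lemma mleader_le_measure_cube3 (j : ℕ) (k : Fin d → ℤ) : mleader μ j k ≤ μ (cube3 j k) :=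
  iSup₂_le fun _ _ => iSup_le fun h => measure_mono h

lemma mleader_le_sum_neighbors (j : ℕ) (k : Fin d → ℤ) :
    mleader μ j k ≤ ∑ e ∈ neighborOffsets d, μ (dyadicCube j (k + e)) :=
  (mleader_le_measure_cube3 μ j k).trans
    ((measure_mono (cube3_subset_biUnion j k)).trans (measure_biUnion_finset_le _ _))

lemma mleader_ne_top [IsFiniteMeasure μ] (j : ℕ) (k : Fin d → ℤ) : mleader μ j k ≠ ⊤ :=
  ne_top_of_le_ne_top (measure_ne_top μ _) (mleader_le_measure_cube3 μ j k)

lemma exists_measure_dyadicCube_ne_zero [NeZero μ] (j : ℕ) :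
    ∃ k : Fin d → ℤ, μ (dyadicCube j k) ≠ 0 := by
  by_contra! h
  exact NeZero.ne μ (Measure.measure_univ_eq_zero.mp
    (iUnion_dyadicCube (d := d) j ▸ measure_iUnion_null_iff.mpr h))

lemma exists_child_measure_ne_zero (j : ℕ) (k : Fin d → ℤ) :
    ∃ e ∈ childOffsets d, μ (dyadicCube j k) ≠ 0 → μ (dyadicCube (j + 1) (2 • k + e)) ≠ 0 := by
  by_contra! h
  have hzero : μ (dyadicCube j k) = 0 := by
    refine measure_mono_null (dyadicCube_subset_biUnion_children j k) ?_
    exact measure_biUnion_null_iff (Finset.countable_toSet _) |>.mpr fun e he => (h e he).2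
  obtain ⟨e, he⟩ : (childOffsets d).Nonempty := ⟨0, by simp [childOffsets]⟩
  exact (h e he).1 hzero

end Leaders

section PartitionFunctions

variable {d : ℕ} (μ : Measure (Rd d))

lemma tauSum_le_leaderSum {q : ℝ} (hq : 0 ≤ q) (j : ℕ) : tauSum μ q j ≤ leaderSum μ q j :=
  ENNReal.tsum_le_tsum fun k =>
    rpowOnSupport_mono hq (measure_le_mleader μ (dyadicCube_subset_cube3 j k))

lemma leaderSum_le_of_le_sum_neighbors {q : ℝ} {j : ℕ} (c : ℝ≥0∞)
    (h : ∀ k, rpowOnSupport q (mleader μ j k) ≤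
      c * ∑ e ∈ neighborOffsets d, rpowOnSupport q (μ (dyadicCube j (k + e)))) :
    leaderSum μ q j ≤ c * 3 ^ d * tauSum μ q j :=
  calc leaderSum μ q j
      ≤ ∑' k, c * ∑ e ∈ neighborOffsets d, rpowOnSupport q (μ (dyadicCube j (k + e))) :=
        ENNReal.tsum_le_tsum h
    _ = c * 3 ^ d * tauSum μ q j := by
      rw [ENNReal.tsum_mul_left,
        tsum_sum_add_eq_card_mul (fun k => rpowOnSupport q (μ (dyadicCube j k))),
        card_neighborOffsets, mul_assoc]
      push_cast
      rfl

lemma rpowOnSupport_mleader_le_of_nonneg {q : ℝ} (hq : 0 ≤ q) (j : ℕ) (k : Fin d → ℤ) :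
    rpowOnSupport q (mleader μ j k) ≤
      ((3 : ℝ≥0∞) ^ d) ^ q *
        ∑ e ∈ neighborOffsets d, rpowOnSupport q (μ (dyadicCube j (k + e))) := by
  obtain ⟨e₀, he₀, hmax⟩ := Finset.exists_max_image (neighborOffsets d)
    (fun e => μ (dyadicCube j (k + e))) ⟨0, by simp [neighborOffsets]⟩
  have hle : mleader μ j k ≤ 3 ^ d * μ (dyadicCube j (k + e₀)) :=
    calc mleader μ j k ≤ ∑ e ∈ neighborOffsets d, μ (dyadicCube j (k + e)) :=
          mleader_le_sum_neighbors μ j k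
      _ ≤ (neighborOffsets d).card • μ (dyadicCube j (k + e₀)) :=
          Finset.sum_le_card_nsmul _ _ _ hmax
      _ = 3 ^ d * μ (dyadicCube j (k + e₀)) := by
          rw [card_neighborOffsets, nsmul_eq_mul]
          push_cast
          rfl
  calc rpowOnSupport q (mleader μ j k)
      ≤ rpowOnSupport q (3 ^ d * μ (dyadicCube j (k + e₀))) := rpowOnSupport_mono hq hle
    _ = ((3 : ℝ≥0∞) ^ d) ^ q * rpowOnSupport q (μ (dyadicCube j (k + e₀))) :=
        rpowOnSupport_mul hq (pow_ne_zero d three_ne_zero)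
    _ ≤ _ := by
        gcongr
        exact Finset.single_le_sum
          (f := fun e => rpowOnSupport q (μ (dyadicCube j (k + e)))) (fun _ _ => zero_le) he₀

lemma rpowOnSupport_mleader_le_of_nonpos {q : ℝ} (hq : q ≤ 0) (j : ℕ) (k : Fin d → ℤ) :
    rpowOnSupport q (mleader μ j k) ≤
      ∑ e ∈ neighborOffsets d, rpowOnSupport q (μ (dyadicCube j (k + e))) := by
  by_cases h0 : mleader μ j k = 0
  · simp [rpowOnSupport, h0]
  obtain ⟨e₀, he₀, hne⟩ := Finset.exists_ne_zero_of_sum_ne_zero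
    (ne_bot_of_le_ne_bot h0 (mleader_le_sum_neighbors μ j k))
  calc rpowOnSupport q (mleader μ j k) ≤ rpowOnSupport q (μ (dyadicCube j (k + e₀))) :=
        rpowOnSupport_le_of_le_of_nonpos hq hne
          (measure_le_mleader μ (dyadicCube_add_subset_cube3 k he₀))
    _ ≤ _ := Finset.single_le_sum
      (f := fun e => rpowOnSupport q (μ (dyadicCube j (k + e)))) (fun _ _ => zero_le) he₀

lemma leaderSum_le_of_nonneg {q : ℝ} (hq : 0 ≤ q) (j : ℕ) :
    leaderSum μ q j ≤ ((3 : ℝ≥0∞) ^ d) ^ q * 3 ^ d * tauSum μ q j :=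
  leaderSum_le_of_le_sum_neighbors μ _ (rpowOnSupport_mleader_le_of_nonneg μ hq j)

lemma leaderSum_le_of_nonpos {q : ℝ} (hq : q ≤ 0) (j : ℕ) :
    leaderSum μ q j ≤ 3 ^ d * tauSum μ q j := by
  simpa using leaderSum_le_of_le_sum_neighbors μ 1 fun k =>
    (rpowOnSupport_mleader_le_of_nonpos μ hq j k).trans_eq (one_mul _).symm

lemma tauSum_le_leaderSum_add_two {q : ℝ} (hq : q ≤ 0) (j : ℕ) :
    tauSum μ q j ≤ leaderSum μ q (j + 2) := by
  choose e he hchild using exists_child_measure_ne_zero μ j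
  let grandchild (k : Fin d → ℤ) : Fin d → ℤ := 4 • k + 1 + e k
  have hinj : Function.Injective grandchild := by
    intro k k' hkk'
    funext i
    have h := congrFun hkk' i
    have hk := mem_childOffsets.mp (he k) i
    have hk' := mem_childOffsets.mp (he k') i
    simp only [grandchild, Pi.add_apply, nsmul_eq_mul, Pi.mul_apply, Nat.cast_ofNat,
      Pi.ofNat_apply] at h
    omega
  refine (ENNReal.tsum_le_tsum fun k => ?_).trans
    (ENNReal.tsum_comp_le_tsum_of_injective hinj fun k => rpowOnSupport q (mleader μ (j + 2) k))
  by_cases h0 : μ (dyadicCube j k) = 0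
  · simp [rpowOnSupport, h0]
  have hleader : mleader μ (j + 2) (grandchild k) ≠ 0 := ne_bot_of_le_ne_bot (hchild k h0)
    (measure_le_mleader μ (dyadicCube_child_subset_cube3_grandchild j k (he k)))
  exact rpowOnSupport_le_of_le_of_nonpos hq hleader ((mleader_le_measure_cube3 μ _ _).trans
    (measure_mono (cube3_grandchild_subset j k (he k))))

lemma tauSum_ne_zero [NeZero μ] [IsFiniteMeasure μ] (q : ℝ) (j : ℕ) : tauSum μ q j ≠ 0 :=
  have ⟨k, hk⟩ := exists_measure_dyadicCube_ne_zero μ j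
  tsum_rpowOnSupport_ne_zero k hk (measure_ne_top μ _)

lemma leaderSum_ne_zero [NeZero μ] [IsFiniteMeasure μ] (q : ℝ) (j : ℕ) : leaderSum μ q j ≠ 0 :=
  have ⟨k, hk⟩ := exists_measure_dyadicCube_ne_zero μ j
  tsum_rpowOnSupport_ne_zero k
    (ne_bot_of_le_ne_bot hk (measure_le_mleader μ (dyadicCube_subset_cube3 j k)))
    (mleader_ne_top μ j k)

lemma tauSum_ne_top [IsFiniteMeasure μ] (hμ : μ (unitCube d)ᶜ = 0) (q : ℝ) (j : ℕ) :
    tauSum μ q j ≠ ⊤ :=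
  tsum_rpowOnSupport_ne_top _
    (fun _ hk => measure_mono_null (dyadicCube_subset_compl_unitCube hk) hμ)
    fun _ => measure_ne_top μ _

lemma leaderSum_ne_top [IsFiniteMeasure μ] (hμ : μ (unitCube d)ᶜ = 0) (q : ℝ) (j : ℕ) :
    leaderSum μ q j ≠ ⊤ := by
  have hτ := tauSum_ne_top μ hμ q j
  rcases le_total 0 q with hq | hq
  · refine ne_top_of_le_ne_top ?_ (leaderSum_le_of_nonneg μ hq j)
    exact ENNReal.mul_ne_top (ENNReal.mul_ne_top
      (ENNReal.rpow_ne_top_of_nonneg hq (by finiteness)) (by finiteness)) hτ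
  · exact ne_top_of_le_ne_top (ENNReal.mul_ne_top (by finiteness) hτ)
      (leaderSum_le_of_nonpos μ hq j)

end PartitionFunctions

def scalingExponent (S : ℕ → ℝ≥0∞) : EReal :=
  liminf (fun j : ℕ =>
    (((-1 : ℝ) / (j : ℝ) : ℝ) : EReal) * (elog (S j) / ((Real.log 2 : ℝ) : EReal))) atTop

lemma tauMu_eq_scalingExponent {d : ℕ} (μ : Measure (Rd d)) (q : ℝ) :
    tauMu μ q = scalingExponent (tauSum μ q) := rfl

lemma leaderScaling_eq_scalingExponent {d : ℕ} (μ : Measure (Rd d)) (q : ℝ) :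
    leaderScaling μ q = scalingExponent (leaderSum μ q) := rfl

lemma scalingExponent_eq_liminf {S : ℕ → ℝ≥0∞} (h0 : ∀ j, S j ≠ 0) (htop : ∀ j, S j ≠ ⊤) :
    scalingExponent S =
      liminf (fun j : ℕ => ((-Real.logb 2 (S j).toReal / j : ℝ) : EReal)) atTop := by
  unfold scalingExponent
  congr 1
  funext j
  rw [elog, if_neg (h0 j), if_neg (htop j), ← EReal.coe_div, ← EReal.coe_mul, Real.logb]
  congr 1
  ring

lemma liminf_neg_div_le_of_le_add {s r : ℕ → ℝ} (c : ℝ) (m : ℕ) (h : ∀ j, s j ≤ c + r (j + m)) :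
    liminf (fun j : ℕ => ((-r j / j : ℝ) : EReal)) atTop ≤
      liminf (fun j : ℕ => ((-s j / j : ℝ) : EReal)) atTop := by
  refine EReal.ge_of_forall_gt_iff_ge.mp fun z hz => ?_
  obtain ⟨z', hzz', hz'⟩ := EReal.lt_iff_exists_real_btwn.mp hz
  have hzz' : z < z' := by exact_mod_cast hzz'
  obtain ⟨N, hN⟩ := eventually_atTop.mp (eventually_lt_of_lt_liminf hz')
  -- the shift by `m` and the constant `c` cost at most `K / j`
  set K := |c| + |z'| * m
  have hK : ∀ᶠ j : ℕ in atTop, K / j ≤ z' - z :=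
    (tendsto_const_div_atTop_nhds_zero_nat K).eventually (eventually_le_nhds (sub_pos.mpr hzz'))
  refine le_liminf_of_le (by isBoundedDefault) ?_
  filter_upwards [eventually_ge_atTop (max N 1), hK] with j hj hjK
  have hj0 : (0 : ℝ) < j := by exact_mod_cast (le_max_right N 1).trans hj
  have hr : z' * (j + m) < -r (j + m) := by
    have : z' < -r (j + m) / (j + m) := by exact_mod_cast hN (j + m) (by omega)
    exact (lt_div_iff₀ (by linarith [(Nat.cast_nonneg m : (0 : ℝ) ≤ m)])).mp this
  have hs : z' * j - K ≤ -s j := by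
    have := mul_le_mul_of_nonneg_right (neg_abs_le z') (Nat.cast_nonneg (α := ℝ) m)
    linarith [h j, le_abs_self c]
  have : z' - K / j ≤ -s j / j := by
    rw [le_div_iff₀ hj0, sub_mul, div_mul_cancel₀ _ hj0.ne']
    exact hs
  exact_mod_cast (show z ≤ -s j / j by linarith)

lemma scalingExponent_le_of_le_mul {S R : ℕ → ℝ≥0∞} (hS0 : ∀ j, S j ≠ 0) (hS : ∀ j, S j ≠ ⊤)
    (hR0 : ∀ j, R j ≠ 0) (hR : ∀ j, R j ≠ ⊤) {C : ℝ≥0∞} (hC : C ≠ ⊤) (m : ℕ)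
    (h : ∀ j, S j ≤ C * R (j + m)) : scalingExponent R ≤ scalingExponent S := by
  rw [scalingExponent_eq_liminf hS0 hS, scalingExponent_eq_liminf hR0 hR]
  have hC0 : C ≠ 0 := by
    rintro rfl
    exact hS0 0 (by simpa using h 0)
  refine liminf_neg_div_le_of_le_add (Real.logb 2 C.toReal) m fun j => ?_
  rw [← Real.logb_mul (ENNReal.toReal_ne_zero.mpr ⟨hC0, hC⟩)
    (ENNReal.toReal_ne_zero.mpr ⟨hR0 _, hR _⟩), ← ENNReal.toReal_mul]
  exact Real.logb_le_logb_of_le one_lt_two (ENNReal.toReal_pos (hS0 j) (hS j))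
    ((ENNReal.toReal_le_toReal (hS j) (ENNReal.mul_ne_top hC (hR _))).mpr (h j))

/-- For a probability measure `μ` on `[0,1]^d` and the function `F_μ` with
wavelet coefficients `d_λ = μ(λ)`, the wavelet-leader scaling function of `F_μ` coincides with
the `L^q`-spectrum of `μ`: `L_{F_μ}(q) = τ_μ(q)` for all `q ∈ ℝ`. -/
theorem leaderScaling_eq_tauMu (d : ℕ) (μ : Measure (Rd d)) [IsProbabilityMeasure μ]
    (hμ : μ ((unitCube d)ᶜ) = 0) :
    ∀ q : ℝ, leaderScaling μ q = tauMu μ q := by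
  intro q
  rw [leaderScaling_eq_scalingExponent, tauMu_eq_scalingExponent]
  have hτ0 := tauSum_ne_zero μ q
  have hτ := tauSum_ne_top μ hμ q
  have hL0 := leaderSum_ne_zero μ q
  have hL := leaderSum_ne_top μ hμ q
  rcases le_total 0 q with hq | hq
  · refine le_antisymm ?_ ?_
    · exact scalingExponent_le_of_le_mul hτ0 hτ hL0 hL ENNReal.one_ne_top 0 fun j => by
        simpa using tauSum_le_leaderSum μ hq j
    · exact scalingExponent_le_of_le_mul hL0 hL hτ0 hτ (ENNReal.mul_ne_top
        (ENNReal.rpow_ne_top_of_nonneg hq (by finiteness)) (by finiteness)) 0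
        (leaderSum_le_of_nonneg μ hq)
  · refine le_antisymm ?_ ?_
    · exact scalingExponent_le_of_le_mul hτ0 hτ hL0 hL ENNReal.one_ne_top 2 fun j => by
        simpa using tauSum_le_leaderSum_add_two μ hq j
    · exact scalingExponent_le_of_le_mul hL0 hL hτ0 hτ (by finiteness) 0
        (leaderSum_le_of_nonpos μ hq)
end
end
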